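/- Let X₁, X₂, … be finite-dimensional real normed spaces and let Z = (Σ ⊕ X_n)_{ℓ¹}. Define the Terenzi-type norm ‖(x_1,…,x_n)‖ = (1-1/(n+1))(‖x_n‖_n + ‖(x_1,…,x_{n-1})‖) + (1/(n+1))·max(‖x_n‖_n/n, ‖(x_1,…,x_{n-1})‖) with ‖(x_1)‖ = ‖x_1‖_1. Then this norm is 2-equivalent to the ℓ¹-sum norm: (1/2)Σ‖x_n‖_n ≤ ‖(x_1,…,x_m)‖ ≤ Σ‖x_n‖_n. -/
import Mathlib


/-- The vector-valued Terenzi norm of the truncated tuple `(x 1, …, x m)`. -/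
noncomputable def vterenzi {X : ℕ → Type*} [∀ n, NormedAddCommGroup (X n)]
    (x : ∀ n, X n) : ℕ → ℝ
  | 0 => 0
  | 1 => ‖x 1‖
  | (n+2) => (1 - 1/((n:ℝ)+3)) * (‖x (n+2)‖ + vterenzi x (n+1))
      + (1/((n:ℝ)+3)) * max (‖x (n+2)‖ / ((n:ℝ)+2)) (vterenzi x (n+1))

theorem vterenzi_equiv_l1 {X : ℕ → Type*} [∀ n, NormedAddCommGroup (X n)]
    [∀ n, NormedSpace ℝ (X n)] [∀ n, FiniteDimensional ℝ (X n)]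
    (x : ∀ n, X n) (m : ℕ) :
    (1/2) * (∑ n ∈ Finset.Icc 1 m, ‖x n‖) ≤ vterenzi x m ∧
      vterenzi x m ≤ ∑ n ∈ Finset.Icc 1 m, ‖x n‖ := by
  induction m with
  | zero => simp [vterenzi]
  | succ n ih =>
    match n, ih with
    | 0, _ =>
      simp [vterenzi]
      linarith [norm_nonneg (x 1)]
    | (k+1), ih =>
      obtain ⟨ih1, ih2⟩ := ih
      rw [Finset.sum_Icc_succ_top (by omega : 1 ≤ k + 2)]
      have hdef : vterenzi x (k+2) = (1 - 1/((k:ℝ)+3)) * (‖x (k+2)‖ + vterenzi x (k+1))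
          + (1/((k:ℝ)+3)) * max (‖x (k+2)‖ / ((k:ℝ)+2)) (vterenzi x (k+1)) := rfl
      rw [hdef]
      set T := vterenzi x (k+1) with hT
      set S := ∑ n ∈ Finset.Icc 1 (k+1), ‖x n‖ with hS
      have hSnn : (0:ℝ) ≤ S := Finset.sum_nonneg fun i _ => norm_nonneg _
      have hTnn : (0:ℝ) ≤ T := by linarith
      have hxnn : (0:ℝ) ≤ ‖x (k+2)‖ := norm_nonneg _
      have hk3 : (0:ℝ) < (k:ℝ) + 3 := by positivity
      have ha1 : (1:ℝ)/((k:ℝ)+3) ≤ 1/3 := by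
        rw [div_le_div_iff₀ hk3 (by norm_num)]; linarith [Nat.cast_nonneg (α := ℝ) k]
      have ha0 : (0:ℝ) < 1/((k:ℝ)+3) := by positivity
      have hM1 : T ≤ max (‖x (k+2)‖ / ((k:ℝ)+2)) T := le_max_right _ _
      have hM2 : max (‖x (k+2)‖ / ((k:ℝ)+2)) T ≤ ‖x (k+2)‖ + T := by
        apply max_le
        · have : ‖x (k+2)‖ / ((k:ℝ)+2) ≤ ‖x (k+2)‖ := by
            apply div_le_self hxnn; linarith [Nat.cast_nonneg (α := ℝ) k]
          linarith
        · linarith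
      constructor
      · nlinarith
      · nlinarith
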